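/- Let a, b, c ∈ ℝ³ be pairwise distinct points and let κ ∈ ℝ, ω₀ ∈ ℝ³, v₀ ∈ ℝ³. Define v_x = κ x + ω₀ ×₃ x + v₀ for x ∈ {a, b, c}. Let β_ab = (b − a)/‖b − a‖, β_ac = (c − a)/‖c − a‖, and P_ab u = u − ⟨β_ab, u⟩β_ab, P_ac u = u − ⟨β_ac, u⟩β_ac. Then ⟨β_ac, P_ab(v_b − v_a)⟩/‖b − a‖ + ⟨β_ab, P_ac(v_c − v_a)⟩/‖c − a‖ = 0. -/
import Mathlib


open scoped RealInnerProductSpace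

noncomputable section

abbrev E3 := EuclideanSpace ℝ (Fin 3)

/-- The cross product on `ℝ³`. -/
def cross3 (x y : E3) : E3 :=
  (EuclideanSpace.equiv (Fin 3) ℝ).symm
    ![x 1 * y 2 - x 2 * y 1, x 2 * y 0 - x 0 * y 2, x 0 * y 1 - x 1 * y 0]

/-- The bearing `β_ab = (b - a)/‖b - a‖`. -/
def bearing3 (a b : E3) : E3 := ‖b - a‖⁻¹ • (b - a)

/-- Orthogonal projection `P_β u = u - ⟪β, u⟫ β` onto `span{β}ᗮ`. -/
def proj3 (β u : E3) : E3 := u - ⟪β, u⟫ • β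

lemma cross3_sub (ω x y : E3) : cross3 ω (x - y) = cross3 ω x - cross3 ω y := by
  ext i
  fin_cases i <;>
    simp [cross3, EuclideanSpace.equiv, PiLp.sub_apply] <;> ring

lemma inner_cross_antisymm (ω x y : E3) : ⟪x, cross3 ω y⟫ = -⟪y, cross3 ω x⟫ := by
  simp [cross3, PiLp.inner_apply, Fin.sum_univ_three, EuclideanSpace.equiv]
  ring

lemma inner_self_cross (ω x : E3) : ⟪x, cross3 ω x⟫ = 0 := by
  have := inner_cross_antisymm ω x x; linarith

/-- Infinitesimal similarity motions (scaling `κ`, rotation `ω₀`, translation `v₀`)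
annihilate the time-derivative of the angle cosine: `T_a(p) ⊆ Null A_G(p)`. -/
theorem similarity_motion_in_null_angle_rigidity
    (a b c : E3) (hab : a ≠ b) (hac : a ≠ c) (hbc : b ≠ c)
    (κ : ℝ) (ω₀ v₀ : E3)
    (va vb vc : E3)
    (hva : va = κ • a + cross3 ω₀ a + v₀)
    (hvb : vb = κ • b + cross3 ω₀ b + v₀)
    (hvc : vc = κ • c + cross3 ω₀ c + v₀) :
    ⟪bearing3 a c, proj3 (bearing3 a b) (vb - va)⟫ / ‖b - a‖
      + ⟪bearing3 a b, proj3 (bearing3 a c) (vc - va)⟫ / ‖c - a‖ = 0 := by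
  have hu : b - a ≠ 0 := sub_ne_zero.2 (Ne.symm hab)
  have hw : c - a ≠ 0 := sub_ne_zero.2 (Ne.symm hac)
  have hnu : ‖b - a‖ ≠ 0 := norm_ne_zero_iff.2 hu
  have hnw : ‖c - a‖ ≠ 0 := norm_ne_zero_iff.2 hw
  have hd1 : vb - va = κ • (b - a) + cross3 ω₀ (b - a) := by
    rw [hvb, hva, cross3_sub]; module
  have hd2 : vc - va = κ • (c - a) + cross3 ω₀ (c - a) := by
    rw [hvc, hva, cross3_sub]; module
  have e1 : ⟪b - a, b - a⟫ = ‖b - a‖ ^ 2 := real_inner_self_eq_norm_sq _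
  have e2 : ⟪c - a, c - a⟫ = ‖c - a‖ ^ 2 := real_inner_self_eq_norm_sq _
  have h1 : ⟪b - a, cross3 ω₀ (b - a)⟫ = 0 := inner_self_cross _ _
  have h2 : ⟪c - a, cross3 ω₀ (c - a)⟫ = 0 := inner_self_cross _ _
  have h3 : ⟪c - a, cross3 ω₀ (b - a)⟫ = -⟪b - a, cross3 ω₀ (c - a)⟫ :=
    inner_cross_antisymm _ _ _
  have h4 : ⟪c - a, b - a⟫ = ⟪b - a, c - a⟫ := real_inner_comm _ _
  simp only [bearing3, proj3, hd1, hd2]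
  generalize b - a = u at *
  generalize c - a = w at *
  simp only [inner_sub_right, inner_add_right,
    real_inner_smul_left, real_inner_smul_right]
  rw [e1, e2, h1, h2, h3, h4]
  field_simp
  ring
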